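/- (Theorem 2, gradient form) Let w ∈ ℝ^d be nonzero, ŵ = w/‖w‖, and β > 0. For the one-layer networks g(x) = relu(⟨w, x⟩) and g_β(x) = softplus_β(⟨w, x⟩), the expected gradient of g over rank-one perturbations along ŵ equals the gradient of the rescaled softplus network: for every x ∈ ℝ^d and every coordinate k, ∫_ℝ p_β(ε) · w_k · 𝟙(⟨w, x⟩ − ‖w‖·ε > 0) dε = w_k · σ_{β/‖w‖}(⟨w, x⟩), where w_k · 𝟙(⟨w, x⟩ − ‖w‖·ε > 0) is the k-th component of the gradient of g at the perturbed point x − ε·ŵ whenever ⟨w, x⟩ ≠ ‖w‖·ε, and the right-hand side is the k-th component of the gradient of g_{β/‖w‖} at x. -/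

import Mathlib

open MeasureTheory
open scoped RealInnerProductSpace

noncomputable def softplus (β t : ℝ) : ℝ := (1 / β) * Real.log (1 + Real.exp (β * t))

noncomputable def logisticSigma (β t : ℝ) : ℝ := 1 / (1 + Real.exp (-(β * t)))

noncomputable def pdens (β ε : ℝ) : ℝ :=
  β / (Real.exp (β * ε / 2) + Real.exp (-(β * ε / 2))) ^ 2

noncomputable def relu (t : ℝ) : ℝ := max t 0

open Filter Set Topology Real

/-! The density `pdens β` is the derivative of `t ↦ σ(β t)`, namely `β σ(β t) (1 - σ(β t))`.
Integrating it over the half-line `{ε | ‖w‖ ε < ⟪w, x⟫}` of perturbations on which the ReLU is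
active therefore gives `σ(β ⟪w, x⟫ / ‖w‖)`. As `pdens β` is even, this integral may be taken
over the reflected half-line `(c, ∞)`, where the nonnegativity of the density and the limit
`σ(β t) → 1` make it integrable without further estimates. The gradient identities are the chain rule `∇ (φ ∘ ⟪w, ·⟫) = φ' (⟪w, ·⟫) • w`, with
`relu' = 𝟙(· > 0)` away from `0` and `softplus_β' = σ_β`. -/

lemma logisticSigma_eq_sigmoid (β t : ℝ) : logisticSigma β t = sigmoid (β * t) := by
  rw [logisticSigma, sigmoid_def, one_div]

lemma logisticSigma_div_right (β a t : ℝ) : logisticSigma β (t / a) = logisticSigma (β / a) t := by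
  rw [logisticSigma, logisticSigma, mul_div_assoc', div_mul_eq_mul_div]

lemma pdens_eq_mul_sigmoid (β ε : ℝ) :
    pdens β ε = β * (sigmoid (β * ε) * (1 - sigmoid (β * ε))) := by
  have hsq : exp (β * ε) = exp (β * ε / 2) ^ 2 := by rw [← exp_nat_mul]; ring_nf
  rw [pdens, ← sigmoid_neg, sigmoid_def, sigmoid_def, neg_neg, exp_neg, exp_neg, hsq]
  field_simp
  ring

lemma pdens_neg (β ε : ℝ) : pdens β (-ε) = pdens β ε := by
  rw [pdens, pdens, add_comm]; ring_nf

lemma pdens_nonneg {β : ℝ} (hβ : 0 ≤ β) (ε : ℝ) : 0 ≤ pdens β ε := by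
  unfold pdens; positivity

lemma hasDerivAt_logisticSigma (β t : ℝ) : HasDerivAt (logisticSigma β) (pdens β t) t := by
  rw [funext (logisticSigma_eq_sigmoid β), pdens_eq_mul_sigmoid]
  exact ((hasDerivAt_sigmoid (β * t)).comp t ((hasDerivAt_id' t).const_mul β)).congr_deriv
    (by ring)

lemma tendsto_logisticSigma_atTop {β : ℝ} (hβ : 0 < β) :
    Tendsto (logisticSigma β) atTop (𝓝 1) := by
  simp_rw [funext (logisticSigma_eq_sigmoid β)]
  exact tendsto_sigmoid_atTop.comp (tendsto_id.const_mul_atTop hβ)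

lemma integral_Ioi_pdens {β : ℝ} (hβ : 0 < β) (c : ℝ) :
    ∫ ε in Ioi c, pdens β ε = 1 - logisticSigma β c :=
  integral_Ioi_of_hasDerivAt_of_nonneg' (fun t _ => hasDerivAt_logisticSigma β t)
    (fun ε _ => pdens_nonneg hβ.le ε) (tendsto_logisticSigma_atTop hβ)

lemma integral_Iio_pdens {β : ℝ} (hβ : 0 < β) (c : ℝ) :
    ∫ ε in Iio c, pdens β ε = logisticSigma β c := by
  have heven : ∫ ε in Iic c, pdens β ε = ∫ ε in Iic c, pdens β (-ε) := by simp only [pdens_neg]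
  rw [← integral_Iic_eq_integral_Iio, heven, integral_comp_neg_Iic, integral_Ioi_pdens hβ,
    logisticSigma_eq_sigmoid, logisticSigma_eq_sigmoid, mul_neg, sigmoid_neg, sub_sub_cancel]

lemma integral_pdens_mul_ite_pos {β a : ℝ} (hβ : 0 < β) (ha : 0 < a) (b t : ℝ) :
    ∫ ε, pdens β ε * (b * if 0 < t - a * ε then 1 else 0) = b * logisticSigma (β / a) t := by
  have hcond : ∀ ε, 0 < t - a * ε ↔ ε ∈ Iio (t / a) := fun ε => by
    rw [sub_pos, mem_Iio, lt_div_iff₀ ha, mul_comm]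
  calc ∫ ε, pdens β ε * (b * if 0 < t - a * ε then 1 else 0)
      = ∫ ε, b * (Iio (t / a)).indicator (pdens β) ε := by
        congr 1 with ε
        simp only [hcond, indicator_apply]
        split_ifs <;> ring
    _ = b * logisticSigma (β / a) t := by
        rw [integral_const_mul, integral_indicator measurableSet_Iio, integral_Iio_pdens hβ,
          logisticSigma_div_right]

lemma hasDerivAt_softplus {β : ℝ} (hβ : β ≠ 0) (t : ℝ) :
    HasDerivAt (softplus β) (logisticSigma β t) t := by
  refine ((((hasDerivAt_id' t).const_mul β).exp.const_add 1).log (by positivity)).const_mul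
    (1 / β) |>.congr_deriv ?_
  rw [logisticSigma, exp_neg]
  field_simp
  ring

lemma hasDerivAt_relu {t : ℝ} (ht : t ≠ 0) :
    HasDerivAt relu (if 0 < t then 1 else 0) t := by
  rcases ht.lt_or_gt with hneg | hpos
  · rw [if_neg hneg.not_gt]
    refine (hasDerivAt_const t (0 : ℝ)).congr_of_eventuallyEq ?_
    filter_upwards [eventually_lt_nhds hneg] with s hs
    exact max_eq_right hs.le
  · rw [if_pos hpos]
    refine (hasDerivAt_id t).congr_of_eventuallyEq ?_
    filter_upwards [eventually_gt_nhds hpos] with s hs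
    exact max_eq_left hs.le

section InnerProductSpace

variable {E : Type*} [NormedAddCommGroup E] [InnerProductSpace ℝ E]

lemma inner_sub_smul_inv_norm_smul (w x : E) (ε : ℝ) :
    ⟪w, x - ε • (‖w‖⁻¹ • w)⟫ = ⟪w, x⟫ - ‖w‖ * ε := by
  rw [inner_sub_right, real_inner_smul_right, real_inner_smul_right, real_inner_self_eq_norm_sq]
  rcases eq_or_ne ‖w‖ 0 with h | h
  · simp [h]
  · field_simp

lemma HasDerivAt.hasGradientAt_comp_inner [CompleteSpace E] {φ : ℝ → ℝ} {c : ℝ} {w z : E}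
    (hφ : HasDerivAt φ c ⟪w, z⟫) : HasGradientAt (fun y => φ ⟪w, y⟫) (c • w) z := by
  rw [hasGradientAt_iff_hasFDerivAt]
  refine (hφ.comp_hasFDerivAt z (innerSL ℝ w).hasFDerivAt).congr_fderiv ?_
  ext v
  simp

end InnerProductSpace

/-- (Theorem 2, gradient form) Let `w ∈ ℝ^d` be nonzero, `ŵ = w/‖w‖`, and `β > 0`. For the
one-layer networks `g(x) = relu(⟨w, x⟩)` and `g_β(x) = softplus_β(⟨w, x⟩)`, the expected
gradient of `g` over rank-one perturbations along `ŵ` equals the gradient of the rescaled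
softplus network: for every `x ∈ ℝ^d` and every coordinate `k`,
`∫_ℝ p_β(ε) · w_k · 𝟙(⟨w, x⟩ − ‖w‖·ε > 0) dε = w_k · σ_{β/‖w‖}(⟨w, x⟩)`, where
`w_k · 𝟙(⟨w, x⟩ − ‖w‖·ε > 0)` is the `k`-th component of the gradient of `g` at the
perturbed point `x − ε·ŵ` whenever `⟨w, x⟩ ≠ ‖w‖·ε`, and the right-hand side is the `k`-th
component of the gradient of `g_{β/‖w‖}` at `x`. -/
theorem expected_gradient_relu_eq_gradient_softplus
    (d : ℕ) (w : EuclideanSpace ℝ (Fin d)) (hw : w ≠ 0) (β : ℝ) (hβ : 0 < β)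
    (x : EuclideanSpace ℝ (Fin d)) :
    (∀ k : Fin d,
      ∫ ε : ℝ, pdens β ε * (w k * (if 0 < ⟪w, x⟫ - ‖w‖ * ε then (1 : ℝ) else 0))
        = w k * logisticSigma (β / ‖w‖) ⟪w, x⟫) ∧
    (∀ ε : ℝ, ⟪w, x⟫ ≠ ‖w‖ * ε →
      HasGradientAt (fun y : EuclideanSpace ℝ (Fin d) => relu ⟪w, y⟫)
        ((if 0 < ⟪w, x⟫ - ‖w‖ * ε then (1 : ℝ) else 0) • w) (x - ε • (‖w‖⁻¹ • w))) ∧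
    ((∀ ε : ℝ, ∀ k : Fin d,
        ((if 0 < ⟪w, x⟫ - ‖w‖ * ε then (1 : ℝ) else 0) • w) k
          = w k * (if 0 < ⟪w, x⟫ - ‖w‖ * ε then (1 : ℝ) else 0)) ∧
      HasGradientAt (fun y : EuclideanSpace ℝ (Fin d) => softplus (β / ‖w‖) ⟪w, y⟫)
        (logisticSigma (β / ‖w‖) ⟪w, x⟫ • w) x ∧
      ∀ k : Fin d, (logisticSigma (β / ‖w‖) ⟪w, x⟫ • w) k
        = w k * logisticSigma (β / ‖w‖) ⟪w, x⟫) := by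
  have hw' : 0 < ‖w‖ := norm_pos_iff.mpr hw
  refine ⟨fun k => integral_pdens_mul_ite_pos hβ hw' _ _, fun ε hε => ?_,
    fun ε k => by rw [PiLp.smul_apply, smul_eq_mul, mul_comm], ?_, fun k => by rw [PiLp.smul_apply, smul_eq_mul, mul_comm]⟩
  · refine HasDerivAt.hasGradientAt_comp_inner ?_
    rw [inner_sub_smul_inv_norm_smul]
    exact hasDerivAt_relu (sub_ne_zero.mpr hε)
  · exact (hasDerivAt_softplus (div_pos hβ hw').ne' _).hasGradientAt_comp_inner
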